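/- arXiv:2204.11158 — 2 statements merged into one kernel-verified Lean document; each statement's English description precedes it below -/
import Mathlib

section
/- For each n ≥ 1, the matrix L^n defined by L^n(i,j;k,l) = 𝔪𝔦𝔫_{r=1..n} L^1(s_r(i), s_r(j); s_r(k), s_r(l)) is stochastic: all entries are nonnegative and for each fixed pair of input vectors i, j ∈ {0,1}^n, the sum of L^n(i,j;k,l) over all k, l ∈ {0,1}^n equals 1. -/
open Finset

/-- The single-colored vertex weight matrix `L¹`. -/
def L1 (t : ℝ) : Bool → Bool → Bool → Bool → ℝ
  | true,  true,  true,  true  => t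
  | true,  true,  false, false => 1 - t
  | true,  false, true,  false => 1
  | false, true,  false, true  => 1
  | false, false, false, false => 1
  | _, _, _, _ => 0

/-- The `r`-fold projection `s_r(x)`: parity of the sum of the first `r` coordinates. -/
def sproj {n : ℕ} (x : Fin n → Bool) (r : Fin n) : Bool :=
  decide ((∑ m ∈ Finset.univ.filter (fun m => m ≤ r), (if x m then (1 : ℕ) else 0)) % 2 = 1)

/-- The modified minimum `𝔪𝔦𝔫` of a (nonempty) family: `0` if both `t` and `1 - t`
occur among its values, the ordinary minimum otherwise. -/
noncomputable def mminOver (t : ℝ) {n : ℕ} (f : Fin (n + 1) → ℝ) : ℝ := by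
  classical
  exact if (∃ r, f r = t) ∧ (∃ r, f r = 1 - t) then 0
    else Finset.univ.inf' Finset.univ_nonempty f

/-- Binary modified minimum. -/
noncomputable def mmin (t x y : ℝ) : ℝ := by
  classical
  exact if (x = t ∧ y = 1 - t) ∨ (x = 1 - t ∧ y = t) then 0 else min x y

/-- The colored vertex weight matrix `Lⁿ` (here with `n + 1` colors). -/
noncomputable def Ln (t : ℝ) {n : ℕ} (i j k l : Fin (n + 1) → Bool) : ℝ :=
  mminOver t (fun r => L1 t (sproj i r) (sproj j r) (sproj k r) (sproj l r))

section Aux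

variable {t : ℝ}

lemma mmin_of_cond {x y : ℝ} (h : (x = t ∧ y = 1 - t) ∨ (x = 1 - t ∧ y = t)) :
    mmin t x y = 0 := by
  unfold mmin; exact if_pos h

lemma mmin_of_not {x y : ℝ} (h : ¬((x = t ∧ y = 1 - t) ∨ (x = 1 - t ∧ y = t))) :
    mmin t x y = min x y := by
  unfold mmin; exact if_neg h

lemma mminOver_of_cond {n : ℕ} {f : Fin (n+1) → ℝ}
    (h : (∃ r, f r = t) ∧ (∃ r, f r = 1 - t)) : mminOver t f = 0 := by
  unfold mminOver; exact if_pos h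

lemma mminOver_of_not {n : ℕ} {f : Fin (n+1) → ℝ}
    (h : ¬((∃ r, f r = t) ∧ (∃ r, f r = 1 - t))) :
    mminOver t f = Finset.univ.inf' Finset.univ_nonempty f := by
  unfold mminOver; exact if_neg h

lemma mminOver_nonneg {n : ℕ} {f : Fin (n+1) → ℝ} (hf : ∀ r, 0 ≤ f r) :
    0 ≤ mminOver t f := by
  by_cases h : (∃ r, f r = t) ∧ (∃ r, f r = 1 - t)
  · rw [mminOver_of_cond h]
  · rw [mminOver_of_not h]
    exact Finset.le_inf' _ _ fun r _ => hf r

lemma mminOver_mem {n : ℕ} {f : Fin (n+1) → ℝ}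
    (hf : ∀ r, f r = 0 ∨ f r = t ∨ f r = 1 - t ∨ f r = 1) :
    mminOver t f = 0 ∨ mminOver t f = t ∨ mminOver t f = 1 - t ∨ mminOver t f = 1 := by
  by_cases h : (∃ r, f r = t) ∧ (∃ r, f r = 1 - t)
  · rw [mminOver_of_cond h]; exact Or.inl rfl
  · rw [mminOver_of_not h]
    obtain ⟨r₀, -, hm⟩ := Finset.exists_mem_eq_inf' (Finset.univ_nonempty) f
    rw [hm]; exact hf r₀

lemma L1_mem (a b u v : Bool) :
    L1 t a b u v = 0 ∨ L1 t a b u v = t ∨ L1 t a b u v = 1 - t ∨ L1 t a b u v = 1 := by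
  cases a <;> cases b <;> cases u <;> cases v <;> simp [L1]

lemma L1_nonneg (ht0 : 0 < t) (ht1 : t < 1) (a b u v : Bool) : 0 ≤ L1 t a b u v := by
  rcases L1_mem (t := t) a b u v with h|h|h|h <;> rw [h] <;> linarith

lemma exists_split {n : ℕ} (F : Fin (n+2) → ℝ) (c : ℝ) :
    (∃ r, F r = c) ↔ (∃ r : Fin (n+1), F r.castSucc = c) ∨ F (Fin.last (n+1)) = c := by
  constructor
  · rintro ⟨r, hr⟩
    induction r using Fin.lastCases with
    | last => exact Or.inr hr
    | cast r => exact Or.inl ⟨r, hr⟩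
  · rintro (⟨r, hr⟩ | hr)
    · exact ⟨r.castSucc, hr⟩
    · exact ⟨_, hr⟩

lemma inf'_split {n : ℕ} (F : Fin (n+2) → ℝ) :
    Finset.univ.inf' Finset.univ_nonempty F
      = min (Finset.univ.inf' Finset.univ_nonempty (fun r : Fin (n+1) => F r.castSucc))
          (F (Fin.last (n+1))) := by
  apply le_antisymm
  · exact le_min (Finset.le_inf' _ _ fun r _ => Finset.inf'_le _ (Finset.mem_univ _))
      (Finset.inf'_le _ (Finset.mem_univ _))
  · apply Finset.le_inf'
    intro r _
    induction r using Fin.lastCases with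
    | last => exact min_le_right _ _
    | cast r => exact le_trans (min_le_left _ _) (Finset.inf'_le _ (Finset.mem_univ r))

lemma mminOver_castSucc (ht0 : 0 < t) (ht1 : t < 1) (ht2 : t ≠ 1/2) {n : ℕ}
    {F : Fin (n+2) → ℝ} (hf : ∀ r, F r = 0 ∨ F r = t ∨ F r = 1 - t ∨ F r = 1) :
    mminOver t F = mmin t (mminOver t (fun r => F r.castSucc)) (F (Fin.last (n+1))) := by
  have hne : t ≠ 1 - t := fun h => ht2 (by linarith)
  have hgV : F (Fin.last (n+1)) = 0 ∨ F (Fin.last (n+1)) = t ∨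
      F (Fin.last (n+1)) = 1 - t ∨ F (Fin.last (n+1)) = 1 := hf _
  have hg0 : 0 ≤ F (Fin.last (n+1)) := by rcases hgV with h|h|h|h <;> rw [h] <;> linarith
  obtain ⟨r₀, -, hm⟩ := Finset.exists_mem_eq_inf' (Finset.univ_nonempty)
      (fun r : Fin (n+1) => F r.castSucc)
  have hmV : Finset.univ.inf' Finset.univ_nonempty (fun r : Fin (n+1) => F r.castSucc) = 0 ∨
      Finset.univ.inf' Finset.univ_nonempty (fun r : Fin (n+1) => F r.castSucc) = t ∨
      Finset.univ.inf' Finset.univ_nonempty (fun r : Fin (n+1) => F r.castSucc) = 1 - t ∨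
      Finset.univ.inf' Finset.univ_nonempty (fun r : Fin (n+1) => F r.castSucc) = 1 := by
    rw [hm]; exact hf _
  by_cases hAB : (∃ r : Fin (n+1), F r.castSucc = t) ∧ (∃ r : Fin (n+1), F r.castSucc = 1 - t)
  · rw [mminOver_of_cond ⟨(exists_split F t).2 (Or.inl hAB.1),
      (exists_split F (1-t)).2 (Or.inl hAB.2)⟩, mminOver_of_cond hAB, mmin_of_not, min_eq_left hg0]
    rintro (⟨h, -⟩ | ⟨h, -⟩) <;> [exact (ne_of_gt ht0) h.symm; exact absurd h.symm (by linarith)]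
  · rw [mminOver_of_not hAB]
    by_cases hC : (∃ r : Fin (n+2), F r = t) ∧ (∃ r : Fin (n+2), F r = 1 - t)
    · rw [mminOver_of_cond hC]
      symm
      rcases (exists_split F t).1 hC.1 with hA | hgt
      · have hB : ¬ ∃ r : Fin (n+1), F r.castSucc = 1 - t := fun hB => hAB ⟨hA, hB⟩
        have hg1t : F (Fin.last (n+1)) = 1 - t := by
          rcases (exists_split F (1-t)).1 hC.2 with hB' | h
          · exact absurd hB' hB
          · exact h
        obtain ⟨rA, hrA⟩ := hA
        have hmt : Finset.univ.inf' Finset.univ_nonempty (fun r : Fin (n+1) => F r.castSucc) ≤ t :=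
          hrA ▸ Finset.inf'_le _ (Finset.mem_univ rA)
        have hm1t : Finset.univ.inf' Finset.univ_nonempty
            (fun r : Fin (n+1) => F r.castSucc) ≠ 1 - t :=
          fun h => hB ⟨r₀, hm.symm.trans h⟩
        rcases hmV with h|h|h|h
        · rw [h, hg1t, mmin_of_not, min_eq_left (by linarith)]
          rintro (⟨h', -⟩ | ⟨h', -⟩) <;> [exact (ne_of_gt ht0) h'.symm; linarith]
        · rw [h, hg1t]; exact mmin_of_cond (Or.inl ⟨rfl, rfl⟩)
        · exact absurd h hm1t
        · exfalso; rw [h] at hmt; linarith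
      · rcases (exists_split F (1-t)).1 hC.2 with hB | hg1t
        · have hA : ¬ ∃ r : Fin (n+1), F r.castSucc = t := fun hA => hAB ⟨hA, hB⟩
          obtain ⟨rB, hrB⟩ := hB
          have hmt : Finset.univ.inf' Finset.univ_nonempty
              (fun r : Fin (n+1) => F r.castSucc) ≤ 1 - t :=
            hrB ▸ Finset.inf'_le _ (Finset.mem_univ rB)
          have hmne : Finset.univ.inf' Finset.univ_nonempty
              (fun r : Fin (n+1) => F r.castSucc) ≠ t :=
            fun h => hA ⟨r₀, hm.symm.trans h⟩
          rcases hmV with h|h|h|h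
          · rw [h, hgt, mmin_of_not, min_eq_left (le_of_lt ht0)]
            rintro (⟨h', -⟩ | ⟨h', -⟩) <;> [exact (ne_of_gt ht0) h'.symm; linarith]
          · exact absurd h hmne
          · rw [h, hgt]; exact mmin_of_cond (Or.inr ⟨rfl, rfl⟩)
          · exfalso; rw [h] at hmt; linarith
        · exact absurd (hgt.symm.trans hg1t) hne
    · rw [mminOver_of_not hC, inf'_split, mmin_of_not]
      rintro (⟨h1, h2⟩ | ⟨h1, h2⟩)
      · exact hC ⟨⟨r₀.castSucc, hm.symm.trans h1⟩, ⟨Fin.last _, h2⟩⟩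
      · exact hC ⟨⟨Fin.last _, h2⟩, ⟨r₀.castSucc, hm.symm.trans h1⟩⟩

lemma sproj_castSucc {n : ℕ} (x : Fin (n+2) → Bool) (r : Fin (n+1)) :
    sproj x r.castSucc = sproj (fun m => x m.castSucc) r := by
  unfold sproj
  have hsum : (∑ m ∈ Finset.univ.filter (fun m => m ≤ r.castSucc), (if x m then (1:ℕ) else 0))
      = ∑ m ∈ Finset.univ.filter (fun m => m ≤ r), (if x m.castSucc then (1:ℕ) else 0) := by
    rw [Finset.sum_filter, Finset.sum_filter, Fin.sum_univ_castSucc]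
    rw [if_neg (not_le.2 (Fin.castSucc_lt_last r)), add_zero]
    refine Finset.sum_congr rfl fun m _ => ?_
    exact if_congr Fin.castSucc_le_castSucc_iff rfl rfl
  rw [hsum]

lemma sproj_last {n : ℕ} (x : Fin (n+1) → Bool) :
    sproj x (Fin.last n) = decide ((∑ m, if x m then (1:ℕ) else 0) % 2 = 1) := by
  unfold sproj
  have hfil : Finset.univ.filter (fun m : Fin (n+1) => m ≤ Fin.last n) = Finset.univ :=
    Finset.filter_true_of_mem fun m _ => Fin.le_last m
  rw [hfil]

lemma sproj_snoc_last {n : ℕ} (x : Fin (n+1) → Bool) (b : Bool) :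
    sproj (Fin.snoc x b) (Fin.last (n+1)) = xor (sproj x (Fin.last n)) b := by
  rw [sproj_last, sproj_last, Fin.sum_univ_castSucc]
  simp only [Fin.snoc_castSucc, Fin.snoc_last]
  cases b
  · simp
  · simp only [Bool.xor_true, if_true]
    rw [← decide_not, decide_eq_decide]
    omega

lemma Ln_mem {n : ℕ} (i j k l : Fin (n+1) → Bool) :
    Ln t i j k l = 0 ∨ Ln t i j k l = t ∨ Ln t i j k l = 1 - t ∨ Ln t i j k l = 1 :=
  mminOver_mem fun r => L1_mem _ _ _ _

lemma Ln_castSucc (ht0 : 0 < t) (ht1 : t < 1) (ht2 : t ≠ 1/2) {n : ℕ}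
    (i j k l : Fin (n+2) → Bool) :
    Ln t i j k l = mmin t (Ln t (fun m => i m.castSucc) (fun m => j m.castSucc)
        (fun m => k m.castSucc) (fun m => l m.castSucc))
      (L1 t (sproj i (Fin.last (n+1))) (sproj j (Fin.last (n+1)))
        (sproj k (Fin.last (n+1))) (sproj l (Fin.last (n+1)))) := by
  unfold Ln
  rw [mminOver_castSucc ht0 ht1 ht2 (fun r => L1_mem _ _ _ _)]
  have hfun : (fun r : Fin (n+1) =>
        L1 t (sproj i r.castSucc) (sproj j r.castSucc) (sproj k r.castSucc) (sproj l r.castSucc))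
      = fun r => L1 t (sproj (fun m => i m.castSucc) r) (sproj (fun m => j m.castSucc) r)
          (sproj (fun m => k m.castSucc) r) (sproj (fun m => l m.castSucc) r) := by
    funext r
    rw [sproj_castSucc, sproj_castSucc, sproj_castSucc, sproj_castSucc]
  rw [hfun]

lemma mminOver_one (ht2 : t ≠ 1/2) (f : Fin 1 → ℝ) : mminOver t f = f 0 := by
  haveI : Subsingleton (Fin (0+1)) := Fin.subsingleton_one
  have hne : t ≠ 1 - t := fun h => ht2 (by linarith)
  rw [mminOver_of_not]
  · obtain ⟨r₀, -, hm⟩ := Finset.exists_mem_eq_inf' (Finset.univ_nonempty) f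
    rw [hm, Subsingleton.elim r₀ 0]
  · rintro ⟨⟨r1, h1⟩, ⟨r2, h2⟩⟩
    rw [Subsingleton.elim r1 r2] at h1
    exact hne (h1.symm.trans h2)

lemma sproj_fin_one (x : Fin 1 → Bool) (r : Fin 1) : sproj x r = x 0 := by
  haveI : Subsingleton (Fin 1) := Fin.subsingleton_one
  have hr : r = 0 := Subsingleton.elim r 0
  subst hr
  have : Finset.univ.filter (fun m : Fin 1 => m ≤ 0) = {0} := by decide
  unfold sproj
  rw [this, Finset.sum_singleton]
  cases h : x 0 <;> simp [h]

lemma stoch2 (ht0 : 0 < t) (ht1 : t < 1) (ht2 : t ≠ 1/2) (M : ℝ)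
    (hM : M = 0 ∨ M = t ∨ M = 1 - t ∨ M = 1) (A B : Bool) :
    ∑ u : Bool, ∑ v : Bool, mmin t M (L1 t A B u v) = M := by
  have hne : t ≠ 1 - t := fun h => ht2 (by linarith)
  have h0 : 0 ≤ M := by rcases hM with rfl|rfl|rfl|rfl <;> linarith
  have h1 : M ≤ 1 := by rcases hM with rfl|rfl|rfl|rfl <;> linarith
  have hz : mmin t M 0 = 0 := by
    rw [mmin_of_not, min_eq_right h0]
    rintro (⟨-, h⟩ | ⟨-, h⟩) <;> linarith
  have ho : mmin t M 1 = M := by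
    rw [mmin_of_not, min_eq_left h1]
    rintro (⟨-, h⟩ | ⟨-, h⟩) <;> linarith
  have hmt : mmin t M t + mmin t M (1 - t) = M := by
    rcases hM with rfl|rfl|rfl|rfl
    · rw [mmin_of_not (by rintro (⟨h, -⟩ | ⟨h, -⟩) <;> linarith),
        mmin_of_not (by rintro (⟨h, -⟩ | ⟨h, -⟩) <;> linarith),
        min_eq_left (le_of_lt ht0), min_eq_left (by linarith)]
      ring
    · rw [mmin_of_not (by rintro (⟨-, h⟩ | ⟨h, -⟩) <;> exact hne h),
        mmin_of_cond (Or.inl ⟨rfl, rfl⟩), min_self, add_zero]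
    · rw [mmin_of_cond (Or.inr ⟨rfl, rfl⟩),
        mmin_of_not (by rintro (⟨h, -⟩ | ⟨-, h⟩) <;> exact hne h.symm),
        min_self, zero_add]
    · rw [mmin_of_not (by rintro (⟨h, -⟩ | ⟨h, -⟩) <;> linarith),
        mmin_of_not (by rintro (⟨h, -⟩ | ⟨h, -⟩) <;> linarith),
        min_eq_right (le_of_lt ht1), min_eq_right (by linarith)]
      ring
  cases A <;> cases B <;> simp [Fintype.sum_bool, L1, hz, ho] <;> linarith [hmt]

lemma sum_xor (h : Bool → ℝ) (X : Bool) : ∑ b : Bool, h (xor X b) = ∑ b : Bool, h b := by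
  cases X
  · simp
  · rw [Fintype.sum_bool, Fintype.sum_bool]
    simp only [Bool.true_xor, Bool.not_true, Bool.not_false]
    exact add_comm _ _

def snocEquiv (n : ℕ) : ((Fin n → Bool) × Bool) ≃ (Fin (n+1) → Bool) where
  toFun p := Fin.snoc p.1 p.2
  invFun f := (Fin.init f, f (Fin.last n))
  left_inv p := by simp [Fin.init_snoc, Fin.snoc_last]
  right_inv f := Fin.snoc_init_self f

end Aux

/-- for every `n ≥ 1`, the matrix `Lⁿ` is stochastic: entries are
nonnegative and the sum over outputs is `1` for each fixed input. -/
theorem Ln_stochastic (t : ℝ) (ht0 : 0 < t) (ht1 : t < 1) (ht2 : t ≠ 1 / 2) (n : ℕ) :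
    (∀ i j k l : Fin (n + 1) → Bool, 0 ≤ Ln t i j k l) ∧
    (∀ i j : Fin (n + 1) → Bool,
      ∑ k : Fin (n + 1) → Bool, ∑ l : Fin (n + 1) → Bool, Ln t i j k l = 1) := by
  constructor
  · intro i j k l
    exact mminOver_nonneg fun r => L1_nonneg ht0 ht1 _ _ _ _
  · induction n with
    | zero =>
      intro i j
      have key : ∀ a b : Bool, ∑ u : Bool, ∑ v : Bool, L1 t a b u v = 1 := by
        intro a b
        cases a <;> cases b <;> simp [Fintype.sum_bool, L1] <;> ring
      have hLn : ∀ k l : Fin 1 → Bool, Ln t i j k l = L1 t (i 0) (j 0) (k 0) (l 0) := by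
        intro k l
        unfold Ln
        rw [mminOver_one ht2, sproj_fin_one, sproj_fin_one, sproj_fin_one, sproj_fin_one]
      simp only [hLn]
      calc ∑ k : Fin 1 → Bool, ∑ l : Fin 1 → Bool, L1 t (i 0) (j 0) (k 0) (l 0)
          = ∑ u : Bool, ∑ v : Bool, L1 t (i 0) (j 0) u v := by
            refine Fintype.sum_equiv (Equiv.funUnique (Fin 1) Bool) _ _ (fun k => ?_)
            exact Fintype.sum_equiv (Equiv.funUnique (Fin 1) Bool) _ _ (fun l => rfl)
        _ = 1 := key (i 0) (j 0)
    | succ n ih =>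
      intro i j
      have hk : ∀ f : (Fin (n+2) → Bool) → ℝ,
          ∑ k : Fin (n+2) → Bool, f k
            = ∑ k' : Fin (n+1) → Bool, ∑ kb : Bool, f (Fin.snoc k' kb) := by
        intro f
        rw [← Equiv.sum_comp (snocEquiv (n+1)) f, Fintype.sum_prod_type]
        rfl
      have hrw : ∀ (k' l' : Fin (n+1) → Bool) (kb lb : Bool),
          Ln t i j (Fin.snoc k' kb) (Fin.snoc l' lb)
            = mmin t (Ln t (fun m => i m.castSucc) (fun m => j m.castSucc) k' l')
              (L1 t (sproj i (Fin.last (n+1))) (sproj j (Fin.last (n+1)))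
                (xor (sproj k' (Fin.last n)) kb) (xor (sproj l' (Fin.last n)) lb)) := by
        intro k' l' kb lb
        rw [Ln_castSucc ht0 ht1 ht2]
        simp only [Fin.snoc_castSucc, sproj_snoc_last]
      rw [hk (fun k => ∑ l : Fin (n+2) → Bool, Ln t i j k l)]
      have hl : ∀ (k' : Fin (n+1) → Bool) (kb : Bool),
          ∑ l : Fin (n+2) → Bool, Ln t i j (Fin.snoc k' kb) l
            = ∑ l' : Fin (n+1) → Bool, ∑ lb : Bool, Ln t i j (Fin.snoc k' kb) (Fin.snoc l' lb) :=
        fun k' kb => hk _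
      simp only [hl, hrw]
      have inner : ∀ (M : ℝ), (M = 0 ∨ M = t ∨ M = 1 - t ∨ M = 1) → ∀ X Y : Bool,
          ∑ kb : Bool, ∑ lb : Bool,
            mmin t M (L1 t (sproj i (Fin.last (n+1))) (sproj j (Fin.last (n+1)))
              (xor X kb) (xor Y lb)) = M := by
        intro M hM X Y
        calc ∑ kb : Bool, ∑ lb : Bool,
              mmin t M (L1 t (sproj i (Fin.last (n+1))) (sproj j (Fin.last (n+1)))
                (xor X kb) (xor Y lb))
            = ∑ kb : Bool, ∑ lb : Bool,
              mmin t M (L1 t (sproj i (Fin.last (n+1))) (sproj j (Fin.last (n+1)))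
                (xor X kb) lb) := by
              refine Finset.sum_congr rfl fun kb _ => ?_
              exact sum_xor (fun v => mmin t M (L1 t (sproj i (Fin.last (n+1)))
                (sproj j (Fin.last (n+1))) (xor X kb) v)) Y
          _ = ∑ u : Bool, ∑ lb : Bool,
              mmin t M (L1 t (sproj i (Fin.last (n+1))) (sproj j (Fin.last (n+1))) u lb) :=
              sum_xor (fun u => ∑ lb : Bool, mmin t M (L1 t (sproj i (Fin.last (n+1)))
                (sproj j (Fin.last (n+1))) u lb)) X
          _ = M := stoch2 ht0 ht1 ht2 M hM _ _
      calc ∑ k' : Fin (n+1) → Bool, ∑ kb : Bool, ∑ l' : Fin (n+1) → Bool, ∑ lb : Bool,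
            mmin t (Ln t (fun m => i m.castSucc) (fun m => j m.castSucc) k' l')
              (L1 t (sproj i (Fin.last (n+1))) (sproj j (Fin.last (n+1)))
                (xor (sproj k' (Fin.last n)) kb) (xor (sproj l' (Fin.last n)) lb))
          = ∑ k' : Fin (n+1) → Bool, ∑ l' : Fin (n+1) → Bool,
              Ln t (fun m => i m.castSucc) (fun m => j m.castSucc) k' l' := by
            refine Finset.sum_congr rfl fun k' _ => ?_
            rw [Finset.sum_comm]
            exact Finset.sum_congr rfl fun l' _ => inner _ (Ln_mem _ _ _ _) _ _
        _ = 1 := ih (fun m => i m.castSucc) (fun m => j m.castSucc)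
end

section
/- Uniqueness of weight-t and weight-(1−t) outputs: let m ≤ n be positive integers and suppose L^m(𝔦,𝔧;𝔨,𝔩) ∈ {t, 1−t} for some fixed 𝔦,𝔧,𝔨,𝔩 ∈ {0,1}^m. Then for any i, j ∈ {0,1}^n whose truncations to the first m coordinates equal 𝔦 and 𝔧 respectively, there exist unique k¹, l¹ ∈ {0,1}^n with L^n(i,j;k¹,l¹) = t, unique k², l² ∈ {0,1}^n with L^n(i,j;k²,l²) = 1−t, and L^n(i,j;k,l) = 0 for all other pairs (k,l). -/
open Finset

/-! By hypothesis some weight of `Lᵐ(𝔦,𝔧;𝔨,𝔩)` is `t` or `1 - t`, and `L¹` takes these values only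
on inputs `(1,1)`; so some color `r₀` has `s_{r₀}(i) = s_{r₀}(j) = 1`. There `L¹` is below `1`, hence
`Lⁿ(i,j;k,l) ∈ {0, t, 1 - t}`. Moreover `Lⁿ(i,j;k,l) = t` iff every color has weight `t` or `1`,
i.e. `(s_r(k), s_r(l)) = (s_r(i), s_r(j))` for all `r` (the weight `t` is then attained at `r₀`);
likewise `Lⁿ(i,j;k,l) = 1 - t` iff `(s_r(k), s_r(l)) = (s_r(i) ∧ ¬s_r(j), ¬s_r(i) ∧ s_r(j))` for all
`r`. Since the prefix-parity map `s` is a bijection of `{0,1}ⁿ`, each condition has exactly one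
solution `(k, l)`. -/

lemma sproj_zero {n : ℕ} (x : Fin (n + 1) → Bool) : sproj x 0 = x 0 := by
  have : univ.filter (fun m : Fin (n + 1) => m ≤ 0) = {0} := by ext m; simp
  simp only [sproj, this, sum_singleton]
  cases x 0 <;> simp

lemma sproj_succ {n : ℕ} (x : Fin (n + 1) → Bool) (r : Fin n) :
    sproj x r.succ = xor (x r.succ) (sproj x r.castSucc) := by
  have : univ.filter (fun m : Fin (n + 1) => m ≤ r.succ) =
      insert r.succ (univ.filter (fun m => m ≤ r.castSucc)) := by
    ext m
    simp only [mem_filter, mem_univ, true_and, mem_insert, Fin.le_def, Fin.ext_iff, Fin.val_succ,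
      Fin.val_castSucc]
    omega
  rw [sproj, sproj, this, sum_insert (by simp [Fin.le_def])]
  generalize ∑ m ∈ univ.filter (fun m => m ≤ r.castSucc), (if x m then 1 else 0) = c
  cases x r.succ <;> rcases Nat.mod_two_eq_zero_or_one c with h | h <;> simp [h, Nat.add_mod]

lemma sproj_castLE {m n : ℕ} (h : m ≤ n) (x : Fin n → Bool) (r : Fin m) :
    sproj (fun r' => x (Fin.castLE h r')) r = sproj x (Fin.castLE h r) := by
  have : univ.filter (fun a : Fin n => a ≤ Fin.castLE h r) =
      (univ.filter (fun a : Fin m => a ≤ r)).map (Fin.castLEEmb h) := by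
    ext a
    simp only [mem_filter, mem_univ, true_and, mem_map, Fin.castLEEmb_apply, Fin.le_def,
      Fin.val_castLE]
    exact ⟨fun ha => ⟨⟨a, by omega⟩, ha, rfl⟩, by rintro ⟨b, hb, rfl⟩; exact hb⟩
  simp only [sproj, this, sum_map]
  rfl

/-- Each coordinate is recovered from two consecutive prefix parities. -/
lemma sproj_injective {n : ℕ} : Function.Injective (sproj (n := n)) := by
  intro x y h
  cases n with
  | zero => exact Subsingleton.elim x y
  | succ n =>
    funext r
    induction r using Fin.cases with
    | zero => simpa only [sproj_zero] using congr_fun h 0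
    | succ r =>
      have hr := congr_fun h r.succ
      rw [sproj_succ, sproj_succ, congr_fun h r.castSucc] at hr
      exact Bool.xor_left_inj.mp hr

lemma sproj_bijective {n : ℕ} : Function.Bijective (sproj (n := n)) :=
  Finite.injective_iff_bijective.mp sproj_injective

lemma existsUnique_sproj_eq_prod {n : ℕ} (g h : Fin n → Bool) :
    ∃! p : (Fin n → Bool) × (Fin n → Bool), sproj p.1 = g ∧ sproj p.2 = h := by
  obtain ⟨k, hk⟩ := sproj_bijective.2 g
  obtain ⟨l, hl⟩ := sproj_bijective.2 h
  refine ⟨(k, l), ⟨hk, hl⟩, fun p ⟨hpk, hpl⟩ => Prod.ext ?_ ?_⟩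
  · exact sproj_injective (hpk.trans hk.symm)
  · exact sproj_injective (hpl.trans hl.symm)

section L1

variable {t : ℝ}

lemma L1_mem_s6 (a b c d : Bool) : L1 t a b c d ∈ ({0, t, 1 - t, 1} : Set ℝ) := by
  cases a <;> cases b <;> cases c <;> cases d <;> simp [L1]

lemma L1_eq_self_or_one_iff (ht0 : t ≠ 0) (ht : t ≠ 1 / 2) {a b c d : Bool} :
    L1 t a b c d = t ∨ L1 t a b c d = 1 ↔ c = a ∧ d = b := by
  have h₁ : 1 - t ≠ t := fun h => ht (by linarith)
  have h₂ : 1 - t ≠ 1 := fun h => ht0 (by linarith)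
  cases a <;> cases b <;> cases c <;> cases d <;> simp [L1, ht0.symm, h₁, h₂]

lemma L1_eq_one_sub_or_one_iff (ht1 : t ≠ 1) (ht : t ≠ 1 / 2) {a b c d : Bool} :
    L1 t a b c d = 1 - t ∨ L1 t a b c d = 1 ↔ c = (a && !b) ∧ d = (!a && b) := by
  have h₁ : t ≠ 1 - t := fun h => ht (by linarith)
  have h₂ : (0 : ℝ) ≠ 1 - t := fun h => ht1 (by linarith)
  cases a <;> cases b <;> cases c <;> cases d <;> simp [L1, ht1, h₁, h₂]

lemma inputs_eq_true_of_L1_eq (ht0 : t ≠ 0) (ht1 : t ≠ 1) {a b c d : Bool}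
    (h : L1 t a b c d = t ∨ L1 t a b c d = 1 - t) : a = true ∧ b = true := by
  have h₁ : (0 : ℝ) ≠ 1 - t := fun h => ht1 (by linarith)
  have h₂ : (1 : ℝ) ≠ 1 - t := fun h => ht0 (by linarith)
  cases a <;> cases b <;> cases c <;> cases d <;> simp_all [L1, ht0.symm, ht1.symm]

lemma L1_true_true_lt_one (ht0 : 0 < t) (ht1 : t < 1) (c d : Bool) : L1 t true true c d < 1 := by
  cases c <;> cases d <;> simp [L1] <;> linarith

end L1

section mminOver

variable {t : ℝ} {n : ℕ} {f : Fin (n + 1) → ℝ}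

lemma exists_eq_mminOver (h : mminOver t f ≠ 0) : ∃ r, f r = mminOver t f := by
  classical
  unfold mminOver at h ⊢
  split_ifs at h ⊢
  · exact absurd rfl h
  · obtain ⟨r, -, hr⟩ := exists_mem_eq_inf' univ_nonempty f
    exact ⟨r, hr.symm⟩

lemma mminOver_one_sub (t : ℝ) (f : Fin (n + 1) → ℝ) : mminOver (1 - t) f = mminOver t f := by
  unfold mminOver
  rw [sub_sub_cancel]
  exact if_congr and_comm rfl rfl

lemma mminOver_eq_self_iff (ht0 : 0 < t) (ht1 : t ≤ 1) (ht : t ≠ 1 / 2)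
    (hf : ∀ r, f r ∈ ({0, t, 1 - t, 1} : Set ℝ)) :
    mminOver t f = t ↔ (∀ r, f r = t ∨ f r = 1) ∧ ∃ r, f r = t := by
  classical
  have h1t : 1 - t ≠ t := fun h => ht (by linarith)
  unfold mminOver
  split_ifs with hboth
  · refine iff_of_false ht0.ne fun ⟨hall, _⟩ => ?_
    obtain ⟨r, hr⟩ := hboth.2
    rcases hall r with h | h <;> rw [hr] at h
    · exact h1t h
    · linarith
  · constructor
    · intro hinf
      obtain ⟨r₀, -, hr₀⟩ := exists_mem_eq_inf' univ_nonempty f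
      refine ⟨fun r => ?_, r₀, hr₀ ▸ hinf⟩
      have hle : t ≤ f r := hinf ▸ inf'_le f (mem_univ r)
      rcases hf r with h | h | h | h
      · linarith
      · exact .inl h
      · exact absurd ⟨⟨r₀, hr₀ ▸ hinf⟩, r, h⟩ hboth
      · exact .inr h
    · rintro ⟨hall, r₀, hr₀⟩
      refine le_antisymm (hr₀ ▸ inf'_le f (mem_univ r₀)) (le_inf' _ _ fun r _ => ?_)
      rcases hall r with h | h <;> linarith

lemma mminOver_mem_of_exists_lt_one (hf : ∀ r, f r ∈ ({0, t, 1 - t, 1} : Set ℝ))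
    (h : ∃ r, f r < 1) : mminOver t f ∈ ({0, t, 1 - t} : Set ℝ) := by
  classical
  unfold mminOver
  split_ifs
  · exact .inl rfl
  · obtain ⟨r₀, -, hr₀⟩ := exists_mem_eq_inf' univ_nonempty f
    obtain ⟨r, hr⟩ := h
    have hlt : f r₀ < 1 := hr₀ ▸ (inf'_le f (mem_univ r)).trans_lt hr
    rw [hr₀]
    rcases hf r₀ with h | h | h | h
    · exact .inl h
    · exact .inr (.inl h)
    · exact .inr (.inr h)
    · exact absurd h hlt.ne

end mminOver

section Ln

variable {t : ℝ} {n : ℕ} {i j k l : Fin (n + 1) → Bool}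

lemma exists_sproj_eq_true_of_Ln_eq (ht0 : 0 < t) (ht1 : t < 1)
    (h : Ln t i j k l = t ∨ Ln t i j k l = 1 - t) :
    ∃ r, sproj i r = true ∧ sproj j r = true := by
  have hne : Ln t i j k l ≠ 0 := by
    rcases h with h | h <;> rw [h] <;> intro h' <;> linarith
  obtain ⟨r, hr⟩ := exists_eq_mminOver hne
  rw [Ln, ← hr] at h
  exact ⟨r, inputs_eq_true_of_L1_eq ht0.ne' ht1.ne h⟩

lemma Ln_eq_self_iff (ht0 : 0 < t) (ht1 : t < 1) (ht : t ≠ 1 / 2)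
    (hij : ∃ r, sproj i r = true ∧ sproj j r = true) :
    Ln t i j k l = t ↔ sproj k = sproj i ∧ sproj l = sproj j := by
  obtain ⟨r₀, hi, hj⟩ := hij
  rw [Ln, mminOver_eq_self_iff ht0 ht1.le ht fun r => L1_mem_s6 ..]
  simp only [L1_eq_self_or_one_iff ht0.ne' ht, forall_and, ← funext_iff]
  refine and_iff_left_of_imp fun ⟨hk, hl⟩ => ⟨r₀, ?_⟩
  simp [hk, hl, hi, hj, L1]

lemma Ln_eq_one_sub_iff (ht0 : 0 < t) (ht1 : t < 1) (ht : t ≠ 1 / 2)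
    (hij : ∃ r, sproj i r = true ∧ sproj j r = true) :
    Ln t i j k l = 1 - t ↔ sproj k = (fun r => sproj i r && !sproj j r) ∧
      sproj l = (fun r => !sproj i r && sproj j r) := by
  obtain ⟨r₀, hi, hj⟩ := hij
  have hrange (r) : L1 t (sproj i r) (sproj j r) (sproj k r) (sproj l r) ∈
      ({0, 1 - t, 1 - (1 - t), 1} : Set ℝ) := by
    rw [sub_sub_cancel, Set.insert_comm (1 - t)]
    exact L1_mem_s6 ..
  rw [Ln, ← mminOver_one_sub, mminOver_eq_self_iff (by linarith) (by linarith)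
    (fun h => ht (by linarith)) hrange]
  simp only [L1_eq_one_sub_or_one_iff ht1.ne ht, forall_and, ← funext_iff]
  refine and_iff_left_of_imp fun ⟨hk, hl⟩ => ⟨r₀, ?_⟩
  simp [hk, hl, hi, hj, L1]

lemma Ln_mem_of_exists_sproj_eq_true (ht0 : 0 < t) (ht1 : t < 1)
    (hij : ∃ r, sproj i r = true ∧ sproj j r = true) :
    Ln t i j k l ∈ ({0, t, 1 - t} : Set ℝ) := by
  obtain ⟨r₀, hi, hj⟩ := hij
  refine mminOver_mem_of_exists_lt_one (fun r => L1_mem_s6 ..) ⟨r₀, ?_⟩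
  simp only [hi, hj]
  exact L1_true_true_lt_one ht0 ht1 ..

end Ln

/-- uniqueness of weight-`t` and weight-`(1 - t)` outputs of `Lⁿ`
given that the truncation to the first `m` colors has a weight in `{t, 1 - t}`. -/
theorem Ln_unique_t_outputs (t : ℝ) (ht0 : 0 < t) (ht1 : t < 1) (ht2 : t ≠ 1 / 2)
    (m n : ℕ) (hmn : m ≤ n)
    (fi fj fk fl : Fin (m + 1) → Bool)
    (hw : Ln t fi fj fk fl = t ∨ Ln t fi fj fk fl = 1 - t)
    (i j : Fin (n + 1) → Bool)
    (hi : (fun r : Fin (m + 1) => i (Fin.castLE (by omega) r)) = fi)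
    (hj : (fun r : Fin (m + 1) => j (Fin.castLE (by omega) r)) = fj) :
    (∃! p : (Fin (n + 1) → Bool) × (Fin (n + 1) → Bool), Ln t i j p.1 p.2 = t) ∧
    (∃! p : (Fin (n + 1) → Bool) × (Fin (n + 1) → Bool), Ln t i j p.1 p.2 = 1 - t) ∧
    (∀ k l : Fin (n + 1) → Bool,
      Ln t i j k l ≠ t → Ln t i j k l ≠ 1 - t → Ln t i j k l = 0) := by
  have hij : ∃ r, sproj i r = true ∧ sproj j r = true := by
    obtain ⟨r, hr⟩ := exists_sproj_eq_true_of_Ln_eq ht0 ht1 hw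
    subst hi hj
    exact ⟨Fin.castLE (by omega) r, by simpa only [sproj_castLE] using hr⟩
  refine ⟨?_, ?_, fun k l hkt hk1t => ?_⟩
  · simpa only [Ln_eq_self_iff ht0 ht1 ht2 hij] using existsUnique_sproj_eq_prod (sproj i) (sproj j)
  · simpa only [Ln_eq_one_sub_iff ht0 ht1 ht2 hij] using existsUnique_sproj_eq_prod _ _
  · rcases Ln_mem_of_exists_sproj_eq_true (k := k) (l := l) ht0 ht1 hij with h | h | h
    · exact h
    · exact absurd h hkt
    · exact absurd h hk1t
end
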